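/- Let A : Matrix (Fin m) (Fin n) ℤ with a bouquet decomposition c_1, …, c_s, bouquet matrix A_B, and map B(u) = Σ_i u_i • c_i, and assume each c_i is componentwise nonnegative. Then for every finite subset M ⊆ ker_ℤ(A_B): M is a Markov basis of A_B if and only if B(M) := {B(u) | u ∈ M} is a Markov basis of A; moreover M is a minimal Markov basis of A_B if and only if B(M) is a minimal Markov basis of A. -/
import Mathlib


/-- The integer kernel of an integer matrix. -/
def kerZ {m n : ℕ} (A : Matrix (Fin m) (Fin n) ℤ) : Set (Fin n → ℤ) :=
  {u | A.mulVec u = 0}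

/-- The componentwise positive part `u⁺` of an integer vector. -/
def posPartZ {n : ℕ} (u : Fin n → ℤ) : Fin n → ℤ := fun i => max (u i) 0

/-- The componentwise negative part `u⁻` of an integer vector. -/
def negPartZ {n : ℕ} (u : Fin n → ℤ) : Fin n → ℤ := fun i => max (-u i) 0

/-- `u = v + w` is a proper conformal decomposition within `kerZ A`. -/
def IsProperConformalDecomp {m n : ℕ} (A : Matrix (Fin m) (Fin n) ℤ)
    (u v w : Fin n → ℤ) : Prop :=
  v ∈ kerZ A ∧ w ∈ kerZ A ∧ v ≠ 0 ∧ w ≠ 0 ∧ u = v + w ∧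
    posPartZ u = posPartZ v + posPartZ w ∧ negPartZ u = negPartZ v + negPartZ w

/-- `u` belongs to the Graver basis of `A`: it is a nonzero element of the integer
kernel admitting no proper conformal decomposition. -/
def InGraver {m n : ℕ} (A : Matrix (Fin m) (Fin n) ℤ) (u : Fin n → ℤ) : Prop :=
  u ∈ kerZ A ∧ u ≠ 0 ∧ ¬ ∃ v w, IsProperConformalDecomp A u v w

/-- `u = v + w` is a proper semiconformal decomposition within `kerZ A`. -/
def IsProperSemiconformalDecomp {m n : ℕ} (A : Matrix (Fin m) (Fin n) ℤ)
    (u v w : Fin n → ℤ) : Prop :=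
  v ∈ kerZ A ∧ w ∈ kerZ A ∧ v ≠ 0 ∧ w ≠ 0 ∧ u = v + w ∧
    ∀ i, (0 < v i → 0 ≤ w i) ∧ (w i < 0 → v i ≤ 0)

/-- `c 0, …, c (s-1)` is a bouquet decomposition of `A`: the supports are nonempty,
pairwise disjoint and cover `Fin n`, and every integer kernel element of `A` is,
on the support of each `c i`, an integer multiple of `c i`. -/
def IsBouquetDecomposition {m n s : ℕ} (A : Matrix (Fin m) (Fin n) ℤ)
    (c : Fin s → Fin n → ℤ) : Prop :=
  (∀ i, (Function.support (c i)).Nonempty) ∧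
  (∀ i i', i ≠ i' → Disjoint (Function.support (c i)) (Function.support (c i'))) ∧
  (∀ j, ∃ i, c i j ≠ 0) ∧
  (∀ v ∈ kerZ A, ∀ i, ∃ t : ℤ, ∀ j ∈ Function.support (c i), v j = t * c i j)

/-- The bouquet matrix `A_B`, whose `i`-th column is `A.mulVec (c i)`. -/
def bouquetMatrix {m n s : ℕ} (A : Matrix (Fin m) (Fin n) ℤ)
    (c : Fin s → Fin n → ℤ) : Matrix (Fin m) (Fin s) ℤ :=
  Matrix.of fun k i => A.mulVec (c i) k

/-- The map `B(u) = Σ_i u_i • c_i`. -/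
def Bmap {n s : ℕ} (c : Fin s → Fin n → ℤ) (u : Fin s → ℤ) : Fin n → ℤ :=
  ∑ i, u i • c i

/-- `M` is a Markov basis of `A`. -/
def IsMarkovBasis {m n : ℕ} (A : Matrix (Fin m) (Fin n) ℤ)
    (M : Finset (Fin n → ℤ)) : Prop :=
  (↑M ⊆ kerZ A) ∧
  ∀ w v : Fin n → ℤ, (∀ j, 0 ≤ w j) → (∀ j, 0 ≤ v j) → w - v ∈ kerZ A →
    ∃ (r : ℕ) (u : Fin r → Fin n → ℤ), (∀ k, u k ∈ M) ∧
      w - v = ∑ k, u k ∧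
      ∀ p : ℕ, 1 ≤ p → p ≤ r → ∀ j,
        0 ≤ w j - ∑ k ∈ Finset.univ.filter (fun k : Fin r => (k : ℕ) < p), u k j

/-- `M` is a minimal Markov basis of `A`: no proper subset of it is a Markov basis. -/
def IsMinimalMarkovBasis {m n : ℕ} (A : Matrix (Fin m) (Fin n) ℤ)
    (M : Finset (Fin n → ℤ)) : Prop :=
  IsMarkovBasis A M ∧ ∀ M' ⊂ M, ¬ IsMarkovBasis A M'

section Aux
variable {m n s : ℕ} (A : Matrix (Fin m) (Fin n) ℤ) (c : Fin s → Fin n → ℤ)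

lemma Bmap_apply (x : Fin s → ℤ) (j : Fin n) : Bmap c x j = ∑ i, x i * c i j := by
  simp [Bmap]

lemma Bmap_sum' {ι : Type*} (F : Finset ι) (u : ι → Fin s → ℤ) :
    Bmap c (∑ k ∈ F, u k) = ∑ k ∈ F, Bmap c (u k) := by
  funext j
  simp only [Bmap_apply, Finset.sum_apply, Finset.sum_mul]
  rw [Finset.sum_comm]

lemma Bmap_sub' (x y : Fin s → ℤ) : Bmap c (x - y) = Bmap c x - Bmap c y := by
  funext j
  simp [Bmap_apply, sub_mul, Finset.sum_sub_distrib]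

lemma mulVec_Bmap (x : Fin s → ℤ) :
    A.mulVec (Bmap c x) = (bouquetMatrix A c).mulVec x := by
  funext k
  simp only [Matrix.mulVec, dotProduct, bouquetMatrix, Bmap_apply, Finset.mul_sum,
    Matrix.of_apply]
  rw [Finset.sum_comm]
  refine Finset.sum_congr rfl fun i _ => ?_
  rw [Finset.sum_mul]
  exact Finset.sum_congr rfl fun j _ => by ring

lemma Bmap_eq_at (hc : IsBouquetDecomposition A c) (x : Fin s → ℤ) {i : Fin s} {j : Fin n}
    (hij : c i j ≠ 0) : Bmap c x j = x i * c i j := by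
  rw [Bmap_apply]
  refine Finset.sum_eq_single i (fun i' _ hne => ?_) (fun h => absurd (Finset.mem_univ i) h)
  have h0 : c i' j = 0 := by
    by_contra h
    exact Set.disjoint_left.mp (hc.2.1 i' i hne) (Function.mem_support.mpr h)
      (Function.mem_support.mpr hij)
  simp [h0]

lemma Bmap_inj (hc : IsBouquetDecomposition A c) : Function.Injective (Bmap c) := by
  intro x y h
  funext i
  obtain ⟨j, hj⟩ := hc.1 i
  have hj' : c i j ≠ 0 := hj
  have := congrFun h j
  rw [Bmap_eq_at A c hc x hj', Bmap_eq_at A c hc y hj'] at this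
  exact mul_right_cancel₀ hj' this

lemma Bmap_nonneg (hcnonneg : ∀ i j, 0 ≤ c i j) {x : Fin s → ℤ} (hx : ∀ i, 0 ≤ x i)
    (j : Fin n) : 0 ≤ Bmap c x j := by
  rw [Bmap_apply]
  exact Finset.sum_nonneg fun i _ => mul_nonneg (hx i) (hcnonneg i j)

lemma Bmap_nonneg_rev (hc : IsBouquetDecomposition A c) (hcnonneg : ∀ i j, 0 ≤ c i j)
    {x : Fin s → ℤ} (h : ∀ j, 0 ≤ Bmap c x j) : ∀ i, 0 ≤ x i := by
  intro i
  obtain ⟨j, hj⟩ := hc.1 i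
  have hj' : c i j ≠ 0 := hj
  have h1 := h j
  rw [Bmap_eq_at A c hc x hj'] at h1
  have hpos : 0 < c i j := lt_of_le_of_ne (hcnonneg i j) (Ne.symm hj')
  nlinarith

lemma ker_surj (hc : IsBouquetDecomposition A c) {v : Fin n → ℤ} (hv : v ∈ kerZ A) :
    ∃ u ∈ kerZ (bouquetMatrix A c), Bmap c u = v := by
  choose t ht using hc.2.2.2 v hv
  have hB : Bmap c t = v := by
    funext j
    obtain ⟨i, hi⟩ := hc.2.2.1 j
    rw [Bmap_eq_at A c hc t hi]
    exact (ht i j (Function.mem_support.mpr hi)).symm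
  refine ⟨t, ?_, hB⟩
  show (bouquetMatrix A c).mulVec t = 0
  rw [← mulVec_Bmap, hB]
  exact hv
end Aux
section Markov
variable {m n s : ℕ} (A : Matrix (Fin m) (Fin n) ℤ) (c : Fin s → Fin n → ℤ)

lemma markov_image (hc : IsBouquetDecomposition A c) (hcnonneg : ∀ i j, 0 ≤ c i j)
    (M : Finset (Fin s → ℤ)) (hM : ↑M ⊆ kerZ (bouquetMatrix A c))
    (h : IsMarkovBasis (bouquetMatrix A c) M) : IsMarkovBasis A (M.image (Bmap c)) := by
  constructor
  · intro v hv
    simp only [Finset.coe_image, Set.mem_image, Finset.mem_coe] at hv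
    obtain ⟨u, hu, rfl⟩ := hv
    show A.mulVec (Bmap c u) = 0
    rw [mulVec_Bmap]
    exact hM hu
  · intro w' v' hw' hv' hker
    obtain ⟨d, hd, hBd⟩ := ker_surj A c hc hker
    set w0 : Fin s → ℤ := fun i => max (d i) 0 with hw0
    set v0 : Fin s → ℤ := fun i => max (-(d i)) 0 with hv0
    have hsub : w0 - v0 = d := by
      funext i
      simp only [hw0, hv0, Pi.sub_apply]
      omega
    obtain ⟨r, u, huM, hsum, hstep⟩ := h.2 w0 v0 (fun i => le_max_right _ _)
      (fun i => le_max_right _ _) (by rw [hsub]; exact hd)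
    refine ⟨r, fun k => Bmap c (u k), fun k => Finset.mem_image_of_mem _ (huM k), ?_, ?_⟩
    · rw [← Bmap_sum', ← hsum, hsub, hBd]
    · intro p hp1 hpr j
      set F := Finset.univ.filter (fun k : Fin r => (k : ℕ) < p) with hF
      set S := ∑ k ∈ F, u k with hS
      have hSle : ∀ i, 0 ≤ w0 i - S i := fun i => by
        have := hstep p hp1 hpr i
        simpa [hS, Finset.sum_apply, hF] using this
      have h1 : Bmap c S j ≤ Bmap c w0 j := by
        have h0 : 0 ≤ Bmap c (w0 - S) j :=
          Bmap_nonneg c hcnonneg (fun i => by have := hSle i; simpa using this) j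
        rw [Bmap_sub'] at h0
        simpa using sub_nonneg.mp (by simpa using h0)
      have h2 : Bmap c w0 j ≤ w' j := by
        obtain ⟨i, hij⟩ := hc.2.2.1 j
        have hdj : w' j - v' j = d i * c i j := by
          have h3 := congrFun hBd j
          rw [Bmap_eq_at A c hc d hij] at h3
          simpa using h3.symm
        rw [Bmap_eq_at A c hc w0 hij]
        rcases le_total 0 (d i) with hdi | hdi
        · rw [hw0]
          simp only [max_eq_left hdi]
          have := hv' j
          linarith
        · rw [hw0]
          simp only [max_eq_right hdi]
          simpa using hw' j
      have hrw : ∑ k ∈ F, Bmap c (u k) j = Bmap c S j := by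
        rw [hS, Bmap_sum']
        simp [Finset.sum_apply]
      simp only [← hF]
      rw [hrw]
      linarith

lemma markov_preimage (hc : IsBouquetDecomposition A c) (hcnonneg : ∀ i j, 0 ≤ c i j)
    (M : Finset (Fin s → ℤ)) (hM : ↑M ⊆ kerZ (bouquetMatrix A c))
    (h : IsMarkovBasis A (M.image (Bmap c))) : IsMarkovBasis (bouquetMatrix A c) M := by
  refine ⟨hM, ?_⟩
  intro w v hw hv hker
  have hker' : Bmap c w - Bmap c v ∈ kerZ A := by
    rw [← Bmap_sub']
    show A.mulVec _ = 0
    rw [mulVec_Bmap]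
    exact hker
  obtain ⟨r, u', hu'M, hsum, hstep⟩ := h.2 (Bmap c w) (Bmap c v)
    (Bmap_nonneg c hcnonneg hw) (Bmap_nonneg c hcnonneg hv) hker'
  choose u huM hBu using fun k => Finset.mem_image.mp (hu'M k)
  refine ⟨r, u, huM, ?_, ?_⟩
  · apply Bmap_inj A c hc
    rw [Bmap_sub', Bmap_sum', hsum]
    exact Finset.sum_congr rfl fun k _ => (hBu k).symm
  · intro p hp1 hpr i
    set F := Finset.univ.filter (fun k : Fin r => (k : ℕ) < p) with hF
    set S := ∑ k ∈ F, u k with hS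
    have key : ∀ j, 0 ≤ Bmap c (w - S) j := by
      intro j
      have := hstep p hp1 hpr j
      rw [Bmap_sub']
      have hrw : ∑ k ∈ F, u' k j = Bmap c S j := by
        rw [hS, Bmap_sum']
        simp only [Finset.sum_apply]
        exact Finset.sum_congr rfl fun k _ => by rw [hBu k]
      simp only [← hF] at this
      rw [hrw] at this
      simpa using this
    have := Bmap_nonneg_rev A c hc hcnonneg key i
    simp only [Pi.sub_apply, hS, Finset.sum_apply] at this
    simpa using this
end Markov
theorem markov_bijection_of_bouquetDecomposition {m n s : ℕ}
    (A : Matrix (Fin m) (Fin n) ℤ) (c : Fin s → Fin n → ℤ)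
    (hc : IsBouquetDecomposition A c)
    (hcnonneg : ∀ i j, 0 ≤ c i j) :
    ∀ M : Finset (Fin s → ℤ), (↑M ⊆ kerZ (bouquetMatrix A c)) →
      (IsMarkovBasis (bouquetMatrix A c) M ↔ IsMarkovBasis A (M.image (Bmap c))) ∧
      (IsMinimalMarkovBasis (bouquetMatrix A c) M ↔
        IsMinimalMarkovBasis A (M.image (Bmap c))) := by
  intro M hM
  have hinj : Function.Injective (Bmap c) := Bmap_inj A c hc
  have main : ∀ N : Finset (Fin s → ℤ), (↑N ⊆ kerZ (bouquetMatrix A c)) →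
      (IsMarkovBasis (bouquetMatrix A c) N ↔ IsMarkovBasis A (N.image (Bmap c))) :=
    fun N hN => ⟨markov_image A c hc hcnonneg N hN, markov_preimage A c hc hcnonneg N hN⟩
  refine ⟨main M hM, ?_⟩
  constructor
  · rintro ⟨hMk, hmin⟩
    refine ⟨(main M hM).mp hMk, ?_⟩
    intro N hN hNk
    -- N ⊂ image M; pull back
    set M' := M.filter (fun x => Bmap c x ∈ N) with hM'
    have hM'sub : M' ⊆ M := Finset.filter_subset _ _
    have himg : M'.image (Bmap c) = N := by
      apply Finset.Subset.antisymm
      · intro y hy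
        simp only [hM', Finset.mem_image, Finset.mem_filter] at hy
        obtain ⟨x, ⟨_, hx⟩, rfl⟩ := hy
        exact hx
      · intro y hy
        have hy' := hN.subset hy
        simp only [Finset.mem_image] at hy' ⊢
        obtain ⟨x, hx, rfl⟩ := hy'
        exact ⟨x, Finset.mem_filter.mpr ⟨hx, hy⟩, rfl⟩
    have hssub : M' ⊂ M := by
      refine ⟨hM'sub, fun hMM' => ?_⟩
      have : M.image (Bmap c) ⊆ N := by
        rw [← himg]
        exact Finset.image_subset_image hMM'
      exact hN.2 this
    refine hmin M' hssub ?_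
    refine (main M' (fun x hx => hM (hM'sub hx))).mpr ?_
    rw [himg]
    exact hNk
  · rintro ⟨hMk, hmin⟩
    refine ⟨(main M hM).mpr hMk, ?_⟩
    intro M' hM' hM'k
    have hM'ker : ↑M' ⊆ kerZ (bouquetMatrix A c) := fun x hx => hM (hM'.1 hx)
    have : IsMarkovBasis A (M'.image (Bmap c)) := (main M' hM'ker).mp hM'k
    refine hmin (M'.image (Bmap c)) ?_ this
    refine ⟨Finset.image_subset_image hM'.1, fun hcontra => ?_⟩
    have : M ⊆ M' := by
      intro x hx
      have : Bmap c x ∈ M'.image (Bmap c) := hcontra (Finset.mem_image_of_mem _ hx)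
      obtain ⟨y, hy, hxy⟩ := Finset.mem_image.mp this
      rwa [← hinj hxy]
    exact hM'.2 this
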